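/- arXiv:2210.09044 — 6 statements merged into one kernel-verified Lean document; each statement's English description precedes it below -/
import Mathlib

section
/- Let L be a symmetric positive definite m×m real matrix, M_z a symmetric positive definite n×n real matrix, z̃ ∈ ℝⁿ, and ζ > 0. Then the block matrix M_θ = [[L, L ⊗ z̃ᵀM_z], [L ⊗ M_z z̃, L ⊗ (ζ²M_z + (M_z z̃)(M_z z̃)ᵀ)]] is symmetric positive definite. -/
/-!
Put `v = M_z z̃` and `W = I ⊗ vᵀ`. Then `L ⊗ z̃ᵀM_z = L W`, `L ⊗ M_z z̃ = Wᵀ L` and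
`L ⊗ (ζ²M_z + v vᵀ) = Wᵀ L W + ζ² (L ⊗ M_z)`, so `M_θ` is the congruence of the block diagonal
matrix `diag(L, ζ² (L ⊗ M_z))` by the invertible matrix `[[I, W], [0, I]]`. Both diagonal blocks
are positive definite, the second as a Kronecker product of positive definite matrices.
-/

open Matrix

/-- The block matrix `M_θ = [[L, L ⊗ z̃ᵀM_z], [L ⊗ M_z z̃, L ⊗ (ζ²M_z + (M_z z̃)(M_z z̃)ᵀ)]]`,
with the Kronecker-product blocks written entrywise. -/
noncomputable def Mtheta {m n : ℕ} (L : Matrix (Fin m) (Fin m) ℝ)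
    (Mz : Matrix (Fin n) (Fin n) ℝ) (zt : Fin n → ℝ) (ζ : ℝ) :
    Matrix (Fin m ⊕ Fin m × Fin n) (Fin m ⊕ Fin m × Fin n) ℝ :=
  Matrix.fromBlocks L
    (Matrix.of fun i jk => L i jk.1 * (Matrix.vecMul zt Mz) jk.2)
    (Matrix.of fun ik j => L ik.1 j * (Mz.mulVec zt) ik.2)
    (Matrix.of fun ik jl => L ik.1 jl.1 *
      (ζ ^ 2 * Mz ik.2 jl.2 + (Mz.mulVec zt) ik.2 * (Mz.mulVec zt) jl.2))

open scoped Kronecker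

namespace Matrix.PosDef

variable {l m R : Type*} [Fintype l] [Fintype m] [CommRing R] [PartialOrder R] [StarRing R]
  [IsOrderedAddMonoid R]

theorem fromBlocks_zero {A : Matrix l l R} {D : Matrix m m R} (hA : A.PosDef) (hD : D.PosDef) :
    (fromBlocks A 0 0 D).PosDef := by
  refine of_dotProduct_mulVec_pos (hA.1.fromBlocks (by simp) hD.1) fun x hx => ?_
  obtain ⟨u, v, rfl⟩ : ∃ u v, x = Sum.elim u v := ⟨_, _, (Sum.elim_comp_inl_inr x).symm⟩
  simp only [fromBlocks_mulVec, zero_mulVec, add_zero, zero_add, Function.star_sumElim,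
    sumElim_dotProduct_sumElim]
  by_cases hu : u = 0
  · have hv : v ≠ 0 := by rintro rfl; exact hx (by simp [hu])
    exact add_pos_of_nonneg_of_pos (hA.posSemidef.dotProduct_mulVec_nonneg u)
      (hD.dotProduct_mulVec_pos hv)
  · exact add_pos_of_pos_of_nonneg (hA.dotProduct_mulVec_pos hu)
      (hD.posSemidef.dotProduct_mulVec_nonneg v)

variable [DecidableEq l] [DecidableEq m]

theorem fromBlocks_shear {A : Matrix l l R} {C : Matrix m m R} (hA : A.PosDef) (hC : C.PosDef)
    (W : Matrix l m R) : (fromBlocks A (A * W) (Wᴴ * A) (Wᴴ * A * W + C)).PosDef := by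
  have hE : IsUnit (fromBlocks 1 W 0 1 : Matrix (l ⊕ m) (l ⊕ m) R) := by
    simp [isUnit_iff_isUnit_det]
  convert (hA.fromBlocks_zero hC).conjTranspose_mul_mul_same (mulVec_injective_of_isUnit hE) using 1
  simp [fromBlocks_conjTranspose, fromBlocks_multiply]

end Matrix.PosDef

theorem Mtheta_eq_fromBlocks {m n : ℕ} (L : Matrix (Fin m) (Fin m) ℝ)
    (Mz : Matrix (Fin n) (Fin n) ℝ) (zt : Fin n → ℝ) (ζ : ℝ) (hMz : Mz.IsSymm) :
    letI W := ((1 : Matrix (Fin m) (Fin m) ℝ) ⊗ₖ replicateRow Unit (Mz *ᵥ zt)).submatrix (·, ()) id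
    Mtheta L Mz zt ζ = fromBlocks L (L * W) (Wᴴ * L) (Wᴴ * L * W + ζ ^ 2 • (L ⊗ₖ Mz)) := by
  have hvec : zt ᵥ* Mz = Mz *ᵥ zt := by rw [← mulVec_transpose, hMz.eq]
  ext (i | ⟨i, k⟩) (j | ⟨j, l⟩) <;>
    simp [Mtheta, hvec, mul_apply, one_apply, mul_ite, ite_mul] <;>
    ring

theorem stmt0 {m n : ℕ} (L : Matrix (Fin m) (Fin m) ℝ) (Mz : Matrix (Fin n) (Fin n) ℝ)
    (zt : Fin n → ℝ) (ζ : ℝ) (hL : L.PosDef) (hMz : Mz.PosDef) (hζ : 0 < ζ) :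
    (Mtheta L Mz zt ζ).PosDef := by
  rw [Mtheta_eq_fromBlocks L Mz zt ζ (isHermitian_iff_isSymm.mp hMz.isHermitian)]
  exact hL.fromBlocks_shear ((hL.kronecker hMz).smul (by positivity)) _
end

section
/- Let A ∈ ℝ^{q×p} and let M be a symmetric positive definite p×p matrix with M = CCᵀ for invertible C. Suppose A M⁻¹ Aᵀ = Ξ Φ² Ξᵀ where Ξ has orthonormal columns (ΞᵀΞ = I) and Φ is diagonal with positive entries. Define Ψ = M⁻¹ Aᵀ Ξ Φ⁻¹. Then A = Ξ Φ Ψᵀ M and Ψᵀ M Ψ = I. -/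
open Matrix

/-- Construction of the GSVD of `A` in the `M`-weighted inner product: with
`Ψ = M⁻¹ Aᵀ Ξ Φ⁻¹`, we have `A = Ξ Φ Ψᵀ M` and `Ψᵀ M Ψ = I`. -/
theorem stmt5 {q p : ℕ} (A : Matrix (Fin q) (Fin p) ℝ) (M C : Matrix (Fin p) (Fin p) ℝ)
    (Xi : Matrix (Fin q) (Fin q) ℝ) (φ : Fin q → ℝ)
    (hM : M.PosDef) (hMC : M = C * Cᵀ) (hC : IsUnit C.det)
    (hXi : Xiᵀ * Xi = 1) (hφ : ∀ k, 0 < φ k)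
    (hGSVD : A * M⁻¹ * Aᵀ = Xi * Matrix.diagonal (fun k => φ k ^ 2) * Xiᵀ) :
    A = Xi * Matrix.diagonal φ *
        (M⁻¹ * Aᵀ * Xi * Matrix.diagonal fun k => (φ k)⁻¹)ᵀ * M ∧
      (M⁻¹ * Aᵀ * Xi * Matrix.diagonal fun k => (φ k)⁻¹)ᵀ * M *
        (M⁻¹ * Aᵀ * Xi * Matrix.diagonal fun k => (φ k)⁻¹) = 1 := by
  have hMu : IsUnit M.det := isUnit_iff_ne_zero.mpr hM.det_pos.ne'
  have hMinvM : M⁻¹ * M = 1 := nonsing_inv_mul M hMu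
  have hMMinv : M * M⁻¹ = 1 := mul_nonsing_inv M hMu
  have hMt : Mᵀ = M := hM.isHermitian.eq
  have hMsymm : M⁻¹ᵀ = M⁻¹ := by rw [transpose_nonsing_inv, hMt]
  have hXi' : Xi * Xiᵀ = 1 := mul_eq_one_comm.mp hXi
  have hφne : ∀ k, φ k ≠ 0 := fun k => (hφ k).ne'
  have hdiag : Matrix.diagonal φ * Matrix.diagonal (fun k => (φ k)⁻¹) = 1 := by
    rw [diagonal_mul_diagonal]
    convert diagonal_one using 2
    exact funext fun k => mul_inv_cancel₀ (hφne k)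
  have hT : (M⁻¹ * Aᵀ * Xi * Matrix.diagonal fun k => (φ k)⁻¹)ᵀ
      = Matrix.diagonal (fun k => (φ k)⁻¹) * Xiᵀ * A * M⁻¹ := by
    simp [transpose_mul, hMsymm, Matrix.mul_assoc, diagonal_transpose]
  constructor
  · rw [hT]
    simp only [Matrix.mul_assoc]
    rw [hMinvM, Matrix.mul_one, ← Matrix.mul_assoc (Matrix.diagonal φ), hdiag,
      Matrix.one_mul, ← Matrix.mul_assoc Xi Xiᵀ, hXi', Matrix.one_mul]
  · rw [hT]
    simp only [Matrix.mul_assoc]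
    rw [← Matrix.mul_assoc M M⁻¹, hMMinv, Matrix.one_mul]
    rw [show A * (M⁻¹ * (Aᵀ * (Xi * Matrix.diagonal fun k => (φ k)⁻¹)))
        = (A * M⁻¹ * Aᵀ) * (Xi * Matrix.diagonal fun k => (φ k)⁻¹) by
      simp [Matrix.mul_assoc]]
    rw [hGSVD]
    simp only [Matrix.mul_assoc]
    rw [← Matrix.mul_assoc Xiᵀ Xi, hXi, Matrix.one_mul,
      ← Matrix.mul_assoc Xiᵀ Xi, hXi, Matrix.one_mul,
      diagonal_mul_diagonal, diagonal_mul_diagonal]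
    convert diagonal_one using 2
    exact funext fun k => by rw [pow_two]; field_simp [hφne k]
end

section
/- Let Z = [z_1 … z_N] ∈ ℝ^{n×N} with linearly independent columns, M_z symmetric positive definite, z̃ ∈ ℝⁿ, ζ > 0, and e ∈ ℝᴺ the vector of all ones. Then the matrix G = e eᵀ + ζ⁻²(Z − z̃eᵀ)ᵀ M_z (Z − z̃eᵀ) is symmetric positive definite. -/
open Matrix

/-- The controller-data Gram matrix `G = e eᵀ + ζ⁻²(Z − z̃eᵀ)ᵀ M_z (Z − z̃eᵀ)`. -/
noncomputable def Gmat {n N : ℕ} (Z : Matrix (Fin n) (Fin N) ℝ)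
    (Mz : Matrix (Fin n) (Fin n) ℝ) (zt : Fin n → ℝ) (ζ : ℝ) :
    Matrix (Fin N) (Fin N) ℝ :=
  (Matrix.of fun _ _ => (1 : ℝ)) +
    (ζ ^ 2)⁻¹ • ((Z - Matrix.of fun i _ => zt i)ᵀ * Mz * (Z - Matrix.of fun i _ => zt i))

/-- If the columns `z_1, …, z_N` of `Z` are linearly independent, `M_z` is symmetric positive
definite and `ζ > 0`, then `G` is symmetric positive definite. -/
theorem stmt7 {n N : ℕ} (Z : Matrix (Fin n) (Fin N) ℝ) (Mz : Matrix (Fin n) (Fin n) ℝ)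
    (zt : Fin n → ℝ) (ζ : ℝ) (hMz : Mz.PosDef) (hζ : 0 < ζ)
    (hZ : LinearIndependent ℝ fun ℓ : Fin N => Zᵀ ℓ) :
    (Gmat Z Mz zt ζ).PosDef := by
  set W : Matrix (Fin n) (Fin N) ℝ := Z - Matrix.of fun i _ => zt i with hW
  have hc : (0:ℝ) < (ζ ^ 2)⁻¹ := by positivity
  refine Matrix.PosDef.of_dotProduct_mulVec_pos ?_ ?_
  · -- Hermitian
    have h1 : (Matrix.of fun _ _ => (1:ℝ) : Matrix (Fin N) (Fin N) ℝ).IsHermitian := by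
      ext i j; simp [Matrix.conjTranspose_apply]
    have h2 : (Wᵀ * Mz * W).IsHermitian := by
      have := (hMz.posSemidef.conjTranspose_mul_mul_same W).isHermitian
      simpa using this
    have h3 : ((ζ ^ 2)⁻¹ • (Wᵀ * Mz * W)).IsHermitian := by
      unfold Matrix.IsHermitian at h2 ⊢
      rw [conjTranspose_smul, h2]; simp
    exact h1.add h3
  · intro x hx
    have hstar : star x = x := by funext i; simp
    rw [hstar]
    have hs : (Matrix.of fun _ _ => (1:ℝ) : Matrix (Fin N) (Fin N) ℝ) *ᵥ x
        = fun _ => ∑ j, x j := by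
      funext i; simp [Matrix.mulVec, dotProduct]
    have key : x ⬝ᵥ (Gmat Z Mz zt ζ *ᵥ x)
        = (∑ j, x j) ^ 2 + (ζ ^ 2)⁻¹ * ((W *ᵥ x) ⬝ᵥ (Mz *ᵥ (W *ᵥ x))) := by
      unfold Gmat
      rw [← hW, Matrix.add_mulVec, Matrix.smul_mulVec, dotProduct_add,
        dotProduct_smul, hs]
      congr 1
      · simp [dotProduct, ← Finset.sum_mul, sq]
      · rw [smul_eq_mul]
        congr 1
        rw [← Matrix.mulVec_mulVec, ← Matrix.mulVec_mulVec,
          dotProduct_mulVec, Matrix.vecMul_transpose]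
    rw [key]
    have hsemi : 0 ≤ (W *ᵥ x) ⬝ᵥ (Mz *ᵥ (W *ᵥ x)) := by
      have := hMz.posSemidef.dotProduct_mulVec_nonneg (W *ᵥ x)
      simpa using this
    by_cases hWx : W *ᵥ x = 0
    · -- then ∑ x ≠ 0
      have hsum : (∑ j, x j) ≠ 0 := by
        intro hsum0
        have hZx : Z *ᵥ x = 0 := by
          have : W *ᵥ x = Z *ᵥ x - (∑ j, x j) • zt := by
            rw [hW, Matrix.sub_mulVec]
            congr 1
            funext i
            simp [Matrix.mulVec, dotProduct, Finset.mul_sum, mul_comm]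
          rw [this, hsum0, zero_smul, sub_zero] at hWx
          exact hWx
        apply hx
        funext ℓ
        refine Fintype.linearIndependent_iff.mp hZ x ?_ ℓ
        funext i
        have := congrFun hZx i
        simpa [Matrix.mulVec, dotProduct, Finset.sum_apply, mul_comm] using this
      have : 0 < (∑ j, x j) ^ 2 := by positivity
      nlinarith
    · have : 0 < (W *ᵥ x) ⬝ᵥ (Mz *ᵥ (W *ᵥ x)) := by
        have := hMz.dotProduct_mulVec_pos hWx
        simpa using this
      nlinarith [sq_nonneg (∑ j, x j)]
end

section
/- Let A_ℓ = [I_m I_m ⊗ z_ℓᵀ M_z] ∈ ℝ^{m × m(n+1)} for ℓ = 1,…,N, let A be the vertical concatenation of the A_ℓ, let M_θ⁻¹ = C⁻ᵀC⁻¹ where C⁻¹ = [[L^{-1/2}, 0], [L^{-1/2} ⊗ (−ζ⁻¹M_z^{1/2}z̃), L^{-1/2} ⊗ ζ⁻¹M_z^{-1/2}]]. Then A M_θ⁻¹ Aᵀ = G ⊗ L⁻¹, where G = eeᵀ + ζ⁻²(Z − z̃eᵀ)ᵀ M_z (Z − z̃eᵀ), Z = [z_1 … z_N], and e ∈ ℝᴺ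 is the all-ones vector. -/
open Matrix Kronecker

/-- The stacked matrix `A` whose `ℓ`-th block row is `A_ℓ = [I_m  I_m ⊗ z_ℓᵀ M_z]`,
where `z_ℓ` is the `ℓ`-th column of `Z`. -/
noncomputable def Abig {m n N : ℕ} (Mz : Matrix (Fin n) (Fin n) ℝ)
    (Z : Matrix (Fin n) (Fin N) ℝ) :
    Matrix (Fin N × Fin m) (Fin m ⊕ Fin m × Fin n) ℝ :=
  Matrix.of fun li => Sum.elim (fun j => if li.2 = j then (1 : ℝ) else 0)
    (fun jk => (if li.2 = jk.1 then (1 : ℝ) else 0) * (Matrix.vecMul (Zᵀ li.1) Mz) jk.2)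

/-- The explicit inverse factor
`C⁻¹ = [[L^{-1/2}, 0], [L^{-1/2} ⊗ (−ζ⁻¹M_z^{1/2}z̃), L^{-1/2} ⊗ ζ⁻¹M_z^{-1/2}]]`. -/
noncomputable def CfacInv {m n : ℕ} (Lh : Matrix (Fin m) (Fin m) ℝ)
    (Mzh : Matrix (Fin n) (Fin n) ℝ) (zt : Fin n → ℝ) (ζ : ℝ) :
    Matrix (Fin m ⊕ Fin m × Fin n) (Fin m ⊕ Fin m × Fin n) ℝ :=
  Matrix.fromBlocks Lh⁻¹ 0
    (Matrix.of fun ik j => Lh⁻¹ ik.1 j * (-(ζ⁻¹) * (Mzh.mulVec zt) ik.2))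
    (Matrix.of fun ik jl => Lh⁻¹ ik.1 jl.1 * (ζ⁻¹ * Mzh⁻¹ ik.2 jl.2))

/-- `A M_θ⁻¹ Aᵀ = G ⊗ L⁻¹`, where `M_θ⁻¹ = C⁻ᵀ C⁻¹`. -/
theorem stmt8 {m n N : ℕ} (L Lh : Matrix (Fin m) (Fin m) ℝ)
    (Mz Mzh : Matrix (Fin n) (Fin n) ℝ) (Z : Matrix (Fin n) (Fin N) ℝ)
    (zt : Fin n → ℝ) (ζ : ℝ)
    (hLh : Lh.PosDef) (hLsq : Lh * Lh = L)
    (hMzh : Mzh.PosDef) (hMzsq : Mzh * Mzh = Mz) (hζ : 0 < ζ) :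
    Abig (m := m) Mz Z * ((CfacInv Lh Mzh zt ζ)ᵀ * CfacInv Lh Mzh zt ζ) *
        (Abig (m := m) Mz Z)ᵀ = Gmat Z Mz zt ζ ⊗ₖ L⁻¹ := by
  have hMs : Mzhᵀ = Mzh := by
    rw [← Matrix.conjTranspose_eq_transpose_of_trivial]; exact hMzh.isHermitian
  have hLs : Lhᵀ = Lh := by
    rw [← Matrix.conjTranspose_eq_transpose_of_trivial]; exact hLh.isHermitian
  have hLis : Lh⁻¹ᵀ = Lh⁻¹ := by rw [Matrix.transpose_nonsing_inv, hLs]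
  have hMis : Mzh⁻¹ᵀ = Mzh⁻¹ := by rw [Matrix.transpose_nonsing_inv, hMs]
  have hdetM : IsUnit Mzh.det := hMzh.det_pos.ne'.isUnit
  have hdetMz : IsUnit Mz.det := by rw [← hMzsq, Matrix.det_mul]; exact hdetM.mul hdetM
  have hMzS : Mzᵀ = Mz := by rw [← hMzsq, Matrix.transpose_mul, hMs]
  have hMzinvS : Mz⁻¹ᵀ = Mz⁻¹ := by rw [Matrix.transpose_nonsing_inv, hMzS]
  have hMsym : ∀ t s, Mzh s t = Mzh t s := Matrix.IsSymm.apply hMs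
  have hMisym : ∀ t s, Mzh⁻¹ s t = Mzh⁻¹ t s := Matrix.IsSymm.apply hMis
  have hMzsym : ∀ t s, Mz s t = Mz t s := Matrix.IsSymm.apply hMzS
  have hMzisym : ∀ t s, Mz⁻¹ s t = Mz⁻¹ t s := Matrix.IsSymm.apply hMzinvS
  -- pointwise collapse lemmas
  have kv : ∀ (v : Fin n → ℝ) (x : Fin n),
      (∑ x2, Mzh⁻¹ x2 x * ∑ i1, Mzh x2 i1 * v i1) = v x := by
    intro v x
    calc (∑ x2, Mzh⁻¹ x2 x * ∑ i1, Mzh x2 i1 * v i1)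
        = Mzh⁻¹.mulVec (Mzh.mulVec v) x := by
          simp only [Matrix.mulVec, dotProduct]
          exact Finset.sum_congr rfl fun x2 _ => by rw [hMisym x x2]
      _ = v x := by
          rw [Matrix.mulVec_mulVec, Matrix.nonsing_inv_mul _ hdetM, Matrix.one_mulVec]
  have kw : ∀ (v : Fin n → ℝ) (x : Fin n),
      (∑ x2, Mz⁻¹ x2 x * ∑ t, v t * Mz t x2) = v x := by
    intro v x
    calc (∑ x2, Mz⁻¹ x2 x * ∑ t, v t * Mz t x2)
        = Mz⁻¹.mulVec (Mz.mulVec v) x := by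
          simp only [Matrix.mulVec, dotProduct]
          refine Finset.sum_congr rfl fun x2 _ => ?_
          rw [hMzisym x x2]
          congr 1
          exact Finset.sum_congr rfl fun t _ => by rw [hMzsym x2 t]; ring
      _ = v x := by
          rw [Matrix.mulVec_mulVec, Matrix.nonsing_inv_mul _ hdetMz, Matrix.one_mulVec]
  have kq : ∀ x2 x : Fin n, (∑ a, Mzh a x2 * Mzh a x) = Mz x2 x := by
    intro x2 x
    rw [← hMzsq, Matrix.mul_apply]
    exact Finset.sum_congr rfl fun a _ => by rw [hMsym x2 a]
  have kinv : ∀ x2 x : Fin n, (∑ a, Mzh⁻¹ a x2 * Mzh⁻¹ a x) = Mz⁻¹ x2 x := by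
    intro x2 x
    rw [← hMzsq, Matrix.mul_inv_rev, Matrix.mul_apply]
    exact Finset.sum_congr rfl fun a _ => by rw [hMisym x2 a]
  have quad : ∀ u v : Fin n → ℝ,
      (∑ a, (∑ b, Mzh a b * u b) * (∑ c, Mzh a c * v c))
        = ∑ s, ∑ t, u t * Mz t s * v s := by
    intro u v
    calc (∑ a, (∑ b, Mzh a b * u b) * (∑ c, Mzh a c * v c))
        = ∑ a, ∑ c, ∑ b, Mzh a b * u b * (Mzh a c * v c) := by
          simp only [Finset.sum_mul, Finset.mul_sum]
      _ = ∑ a, ∑ b, ∑ c, Mzh a b * u b * (Mzh a c * v c) :=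
          Finset.sum_congr rfl fun a _ => Finset.sum_comm
      _ = ∑ b, ∑ a, ∑ c, Mzh a b * u b * (Mzh a c * v c) := Finset.sum_comm
      _ = ∑ b, ∑ c, ∑ a, Mzh a b * u b * (Mzh a c * v c) :=
          Finset.sum_congr rfl fun b _ => Finset.sum_comm
      _ = ∑ b, ∑ c, u b * Mz b c * v c := by
          refine Finset.sum_congr rfl fun b _ => Finset.sum_congr rfl fun c _ => ?_
          calc (∑ a, Mzh a b * u b * (Mzh a c * v c))
              = u b * v c * ∑ a, Mzh a b * Mzh a c := by
                rw [Finset.mul_sum]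
                exact Finset.sum_congr rfl fun a _ => by ring
            _ = u b * Mz b c * v c := by rw [kq b c]; ring
      _ = ∑ s, ∑ t, u t * Mz t s * v s := Finset.sum_comm
  have Qsym : ∀ u v : Fin n → ℝ,
      (∑ s, ∑ t, u t * Mz t s * v s) = ∑ s, ∑ t, v t * Mz t s * u s := by
    intro u v
    rw [Finset.sum_comm]
    exact Finset.sum_congr rfl fun a _ => Finset.sum_congr rfl fun b _ => by
      rw [hMzsym b a]; ring
  ext ⟨ℓ, i⟩ ⟨k, j⟩
  have h1 : ∑ x : Fin m, Lh⁻¹ x i * Lh⁻¹ x j = L⁻¹ i j := by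
    rw [← hLsq, Matrix.mul_inv_rev, Matrix.mul_apply]
    exact Finset.sum_congr rfl fun a _ => by rw [Matrix.IsSymm.apply hLis i a]
  simp only [Matrix.mul_apply, Abig, CfacInv, Gmat, Matrix.kroneckerMap_apply,
    Matrix.transpose_apply, Matrix.of_apply, Fintype.sum_sum_type, Fintype.sum_prod_type,
    Matrix.fromBlocks_apply₁₁, Matrix.fromBlocks_apply₁₂, Matrix.fromBlocks_apply₂₁,
    Matrix.fromBlocks_apply₂₂, Sum.elim_inl, Sum.elim_inr, Matrix.zero_apply,
    ite_mul, mul_ite, mul_zero, zero_mul, one_mul, mul_one, Finset.sum_ite_eq,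
    Finset.sum_ite_irrel, Finset.sum_const_zero, ite_self,
    Finset.sum_ite_eq', Finset.mem_univ, if_true, Matrix.add_apply, Matrix.smul_apply,
    Matrix.sub_apply, smul_eq_mul, Matrix.vecMul, Matrix.mulVec, dotProduct,
    Finset.sum_add_distrib, add_mul, Finset.mul_sum, Finset.sum_mul, add_zero, zero_add]
  have h2 : (∑ x : Fin m, ∑ x_1 : Fin n, ∑ x_2 : Fin n, ∑ i_1 : Fin n,
        Lh⁻¹ x i * (-ζ⁻¹ * (Mzh x_1 x_2 * zt x_2)) * (Lh⁻¹ x j * (-ζ⁻¹ * (Mzh x_1 i_1 * zt i_1))))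
      = ∑ x : Fin n, ∑ i_1 : Fin n, ζ⁻¹ * ζ⁻¹ * (zt i_1 * Mz i_1 x * zt x) * L⁻¹ i j := by
    calc (∑ x : Fin m, ∑ x_1 : Fin n, ∑ x_2 : Fin n, ∑ i_1 : Fin n,
        Lh⁻¹ x i * (-ζ⁻¹ * (Mzh x_1 x_2 * zt x_2)) * (Lh⁻¹ x j * (-ζ⁻¹ * (Mzh x_1 i_1 * zt i_1))))
        = (∑ x : Fin m, Lh⁻¹ x i * Lh⁻¹ x j) * ((ζ⁻¹ * ζ⁻¹) *
            ∑ x_1 : Fin n, (∑ x_2 : Fin n, Mzh x_1 x_2 * zt x_2) *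
              (∑ i_1 : Fin n, Mzh x_1 i_1 * zt i_1)) := by
          simp only [Finset.sum_mul, Finset.mul_sum]
          simp only [← Finset.sum_product', Finset.univ_product_univ]
          refine Fintype.sum_equiv
            ⟨fun p => (p.2.1, p.2.2.2, p.2.2.1, p.1),
             fun q => (q.2.2.2, q.1, q.2.2.1, q.2.1),
             fun _ => rfl, fun _ => rfl⟩ _ _ fun p => ?_
          simp only [Equiv.coe_fn_mk]
          ring
      _ = L⁻¹ i j * ((ζ⁻¹ * ζ⁻¹) * ∑ s : Fin n, ∑ t : Fin n, zt t * Mz t s * zt s) := by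
          rw [h1, quad]
      _ = ∑ x : Fin n, ∑ i_1 : Fin n, ζ⁻¹ * ζ⁻¹ * (zt i_1 * Mz i_1 x * zt x) * L⁻¹ i j := by
          simp only [Finset.mul_sum, Finset.sum_mul]
          exact Finset.sum_congr rfl fun a _ => Finset.sum_congr rfl fun b _ => by ring
  have h3 : (∑ x : Fin n, ∑ x_1 : Fin m, ∑ x_2 : Fin n, ∑ x_3 : Fin n, ∑ x_4 : Fin n,
        Lh⁻¹ x_1 i * (-ζ⁻¹ * (Mzh x_2 x_3 * zt x_3)) * (Lh⁻¹ x_1 j * (ζ⁻¹ * Mzh⁻¹ x_2 x)) *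
          (Z x_4 k * Mz x_4 x))
      = -∑ x : Fin n, ∑ i_1 : Fin n, ζ⁻¹ * ζ⁻¹ * (zt i_1 * Mz i_1 x * Z x k) * L⁻¹ i j := by
    calc (∑ x : Fin n, ∑ x_1 : Fin m, ∑ x_2 : Fin n, ∑ x_3 : Fin n, ∑ x_4 : Fin n,
        Lh⁻¹ x_1 i * (-ζ⁻¹ * (Mzh x_2 x_3 * zt x_3)) * (Lh⁻¹ x_1 j * (ζ⁻¹ * Mzh⁻¹ x_2 x)) *
          (Z x_4 k * Mz x_4 x))
        = ∑ x : Fin n, (∑ x_1 : Fin m, Lh⁻¹ x_1 i * Lh⁻¹ x_1 j) * (-(ζ⁻¹ * ζ⁻¹)) *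
            ((∑ x_2 : Fin n, Mzh⁻¹ x_2 x * ∑ x_3 : Fin n, Mzh x_2 x_3 * zt x_3) *
              (∑ x_4 : Fin n, Z x_4 k * Mz x_4 x)) := by
          simp only [Finset.sum_mul, Finset.mul_sum]
          simp only [← Finset.sum_product', Finset.univ_product_univ]
          refine Fintype.sum_equiv
            ⟨fun p => (p.1, p.2.2.2.2, p.2.2.1, p.2.2.2.1, p.2.1),
             fun q => (q.1, q.2.2.2.2, q.2.2.1, q.2.2.2.1, q.2.1),
             fun _ => rfl, fun _ => rfl⟩ _ _ fun p => ?_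
          simp only [Equiv.coe_fn_mk]
          ring
      _ = ∑ x : Fin n, L⁻¹ i j * (-(ζ⁻¹ * ζ⁻¹)) *
            (zt x * (∑ x_4 : Fin n, Z x_4 k * Mz x_4 x)) := by
          refine Finset.sum_congr rfl fun x _ => ?_
          rw [h1, kv zt x]
      _ = ∑ s : Fin n, ∑ t : Fin n, -(ζ⁻¹ * ζ⁻¹ * (Z t k * Mz t s * zt s) * L⁻¹ i j) := by
          simp only [Finset.mul_sum, Finset.sum_mul]
          exact Finset.sum_congr rfl fun a _ => Finset.sum_congr rfl fun b _ => by ring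
      _ = ∑ s : Fin n, ∑ t : Fin n, -(ζ⁻¹ * ζ⁻¹ * (zt t * Mz t s * Z s k) * L⁻¹ i j) := by
          rw [Finset.sum_comm]
          exact Finset.sum_congr rfl fun a _ => Finset.sum_congr rfl fun b _ => by
            rw [hMzsym b a]; ring
      _ = -∑ x : Fin n, ∑ i_1 : Fin n, ζ⁻¹ * ζ⁻¹ * (zt i_1 * Mz i_1 x * Z x k) * L⁻¹ i j := by
          simp only [Finset.sum_neg_distrib]
  have h4 : (∑ x : Fin n, ∑ x_1 : Fin m, ∑ x_2 : Fin n, ∑ x_3 : Fin n, ∑ i_1 : Fin n,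
        Z x_3 ℓ * Mz x_3 x *
          (Lh⁻¹ x_1 i * (ζ⁻¹ * Mzh⁻¹ x_2 x) * (Lh⁻¹ x_1 j * (-ζ⁻¹ * (Mzh x_2 i_1 * zt i_1)))))
      = -∑ x : Fin n, ∑ i_1 : Fin n, ζ⁻¹ * ζ⁻¹ * (Z i_1 ℓ * Mz i_1 x * zt x) * L⁻¹ i j := by
    calc (∑ x : Fin n, ∑ x_1 : Fin m, ∑ x_2 : Fin n, ∑ x_3 : Fin n, ∑ i_1 : Fin n,
        Z x_3 ℓ * Mz x_3 x *
          (Lh⁻¹ x_1 i * (ζ⁻¹ * Mzh⁻¹ x_2 x) * (Lh⁻¹ x_1 j * (-ζ⁻¹ * (Mzh x_2 i_1 * zt i_1)))))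
        = ∑ x : Fin n, ∑ x_1 : Fin m, ∑ x_2 : Fin n, ∑ i_1 : Fin n, ∑ x_3 : Fin n,
            Z x_3 ℓ * Mz x_3 x *
              (Lh⁻¹ x_1 i * (ζ⁻¹ * Mzh⁻¹ x_2 x) *
                (Lh⁻¹ x_1 j * (-ζ⁻¹ * (Mzh x_2 i_1 * zt i_1)))) :=
          Finset.sum_congr rfl fun x _ => Finset.sum_congr rfl fun a _ =>
            Finset.sum_congr rfl fun b _ => Finset.sum_comm
      _ = ∑ x : Fin n, (∑ x_1 : Fin m, Lh⁻¹ x_1 i * Lh⁻¹ x_1 j) * (-(ζ⁻¹ * ζ⁻¹)) *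
            ((∑ x_2 : Fin n, Mzh⁻¹ x_2 x * ∑ i_1 : Fin n, Mzh x_2 i_1 * zt i_1) *
              (∑ x_3 : Fin n, Z x_3 ℓ * Mz x_3 x)) := by
          simp only [Finset.sum_mul, Finset.mul_sum]
          simp only [← Finset.sum_product', Finset.univ_product_univ]
          refine Fintype.sum_equiv
            ⟨fun p => (p.1, p.2.2.2.2, p.2.2.1, p.2.2.2.1, p.2.1),
             fun q => (q.1, q.2.2.2.2, q.2.2.1, q.2.2.2.1, q.2.1),
             fun _ => rfl, fun _ => rfl⟩ _ _ fun p => ?_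
          simp only [Equiv.coe_fn_mk]
          ring
      _ = ∑ x : Fin n, L⁻¹ i j * (-(ζ⁻¹ * ζ⁻¹)) *
            (zt x * (∑ x_3 : Fin n, Z x_3 ℓ * Mz x_3 x)) := by
          refine Finset.sum_congr rfl fun x _ => ?_
          rw [h1, kv zt x]
      _ = ∑ s : Fin n, ∑ t : Fin n, -(ζ⁻¹ * ζ⁻¹ * (Z t ℓ * Mz t s * zt s) * L⁻¹ i j) := by
          simp only [Finset.mul_sum, Finset.sum_mul]
          exact Finset.sum_congr rfl fun a _ => Finset.sum_congr rfl fun b _ => by ring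
      _ = -∑ x : Fin n, ∑ i_1 : Fin n, ζ⁻¹ * ζ⁻¹ * (Z i_1 ℓ * Mz i_1 x * zt x) * L⁻¹ i j := by
          simp only [Finset.sum_neg_distrib]
  have h5 : (∑ x : Fin n, ∑ x_1 : Fin n, ∑ x_2 : Fin m, ∑ x_3 : Fin n, ∑ x_4 : Fin n, ∑ x_5 : Fin n,
        Z x_4 ℓ * Mz x_4 x_1 *
            (Lh⁻¹ x_2 i * (ζ⁻¹ * Mzh⁻¹ x_3 x_1) * (Lh⁻¹ x_2 j * (ζ⁻¹ * Mzh⁻¹ x_3 x))) *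
          (Z x_5 k * Mz x_5 x))
      = ∑ x : Fin n, ∑ i_1 : Fin n, ζ⁻¹ * ζ⁻¹ * (Z i_1 ℓ * Mz i_1 x * Z x k) * L⁻¹ i j := by
    calc (∑ x : Fin n, ∑ x_1 : Fin n, ∑ x_2 : Fin m, ∑ x_3 : Fin n, ∑ x_4 : Fin n, ∑ x_5 : Fin n,
        Z x_4 ℓ * Mz x_4 x_1 *
            (Lh⁻¹ x_2 i * (ζ⁻¹ * Mzh⁻¹ x_3 x_1) * (Lh⁻¹ x_2 j * (ζ⁻¹ * Mzh⁻¹ x_3 x))) *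
          (Z x_5 k * Mz x_5 x))
        = ∑ x : Fin n, ∑ x_2 : Fin m, ∑ x_1 : Fin n, ∑ x_3 : Fin n, ∑ x_4 : Fin n, ∑ x_5 : Fin n,
            Z x_4 ℓ * Mz x_4 x_1 *
                (Lh⁻¹ x_2 i * (ζ⁻¹ * Mzh⁻¹ x_3 x_1) * (Lh⁻¹ x_2 j * (ζ⁻¹ * Mzh⁻¹ x_3 x))) *
              (Z x_5 k * Mz x_5 x) :=
          Finset.sum_congr rfl fun x _ => Finset.sum_comm
      _ = ∑ x : Fin n, (∑ x_2 : Fin m, Lh⁻¹ x_2 i * Lh⁻¹ x_2 j) * (ζ⁻¹ * ζ⁻¹) *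
            (∑ x_1 : Fin n, (∑ x_3 : Fin n, Mzh⁻¹ x_3 x_1 * Mzh⁻¹ x_3 x) *
              (∑ x_4 : Fin n, Z x_4 ℓ * Mz x_4 x_1)) *
            (∑ x_5 : Fin n, Z x_5 k * Mz x_5 x) := by
          simp only [Finset.sum_mul, Finset.mul_sum]
          simp only [← Finset.sum_product', Finset.univ_product_univ]
          refine Fintype.sum_equiv
            ⟨fun p => (p.1, p.2.2.2.2.2, p.2.2.1, p.2.2.2.2.1, p.2.2.2.1, p.2.1),
             fun q => (q.1, q.2.2.2.2.2, q.2.2.1, q.2.2.2.2.1, q.2.2.2.1, q.2.1),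
             fun _ => rfl, fun _ => rfl⟩ _ _ fun p => ?_
          simp only [Equiv.coe_fn_mk]
          ring
      _ = ∑ x : Fin n, L⁻¹ i j * (ζ⁻¹ * ζ⁻¹) * Z x ℓ * (∑ x_5 : Fin n, Z x_5 k * Mz x_5 x) := by
          refine Finset.sum_congr rfl fun x _ => ?_
          rw [h1]
          simp only [kinv]
          rw [kw (fun t => Z t ℓ) x]
      _ = ∑ s : Fin n, ∑ t : Fin n, ζ⁻¹ * ζ⁻¹ * (Z t k * Mz t s * Z s ℓ) * L⁻¹ i j := by
          simp only [Finset.mul_sum, Finset.sum_mul]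
          exact Finset.sum_congr rfl fun a _ => Finset.sum_congr rfl fun b _ => by ring
      _ = ∑ x : Fin n, ∑ i_1 : Fin n, ζ⁻¹ * ζ⁻¹ * (Z i_1 ℓ * Mz i_1 x * Z x k) * L⁻¹ i j := by
          rw [Finset.sum_comm]
          exact Finset.sum_congr rfl fun a _ => Finset.sum_congr rfl fun b _ => by
            rw [hMzsym b a]; ring
  have hG : (∑ x : Fin n, ∑ i_1 : Fin n,
        (ζ ^ 2)⁻¹ * ((Z i_1 ℓ - zt i_1) * Mz i_1 x * (Z x k - zt x)) * L⁻¹ i j)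
      = ∑ x : Fin n, ∑ i_1 : Fin n,
          (ζ⁻¹ * ζ⁻¹ * (Z i_1 ℓ * Mz i_1 x * Z x k) * L⁻¹ i j
            - ζ⁻¹ * ζ⁻¹ * (Z i_1 ℓ * Mz i_1 x * zt x) * L⁻¹ i j
            - ζ⁻¹ * ζ⁻¹ * (zt i_1 * Mz i_1 x * Z x k) * L⁻¹ i j
            + ζ⁻¹ * ζ⁻¹ * (zt i_1 * Mz i_1 x * zt x) * L⁻¹ i j) := by
    refine Finset.sum_congr rfl fun x _ => Finset.sum_congr rfl fun t _ => ?_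
    rw [pow_two, mul_inv]
    ring
  rw [h1, h2, h3, h4, h5, hG]
  simp only [Finset.sum_sub_distrib, Finset.sum_add_distrib]
  ring
end

section
/- Let M_θ = CCᵀ be symmetric positive definite, let A = ΞΦΨᵀM_θ be a GSVD with ΞᵀΞ = I and ΨᵀM_θΨ = I and Φ diagonal with entries φ_k ≥ 0, and let α > 0. Then Σ := (M_θ + α⁻¹AᵀA)⁻¹ = M_θ⁻¹ − ΨDΨᵀ, where D is diagonal with entries φ_k²/(φ_k² + α). -/
open Matrix

/-- Posterior covariance formula: with `M_θ = CCᵀ` positive definite, a GSVD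
`A = Ξ Φ Ψᵀ M_θ` with `ΞᵀΞ = I`, `Ψᵀ M_θ Ψ = I`, `Φ = diag(φ_k)`, `φ_k ≥ 0`, and `α > 0`,
`Σ = (M_θ + α⁻¹AᵀA)⁻¹ = M_θ⁻¹ − Ψ D Ψᵀ` where `D = diag(φ_k²/(φ_k² + α))`. -/
theorem stmt10 {q p : ℕ} (Mθ C : Matrix (Fin p) (Fin p) ℝ) (A : Matrix (Fin q) (Fin p) ℝ)
    (Xi : Matrix (Fin q) (Fin q) ℝ) (Psi : Matrix (Fin p) (Fin q) ℝ)
    (φ : Fin q → ℝ) (α : ℝ)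
    (hM : Mθ.PosDef) (hMC : Mθ = C * Cᵀ)
    (hXi : Xiᵀ * Xi = 1) (hPsi : Psiᵀ * Mθ * Psi = 1) (hφ : ∀ k, 0 ≤ φ k)
    (hA : A = Xi * Matrix.diagonal φ * Psiᵀ * Mθ) (hα : 0 < α) :
    (Mθ + α⁻¹ • (Aᵀ * A))⁻¹
      = Mθ⁻¹ - Psi * Matrix.diagonal (fun k => φ k ^ 2 / (φ k ^ 2 + α)) * Psiᵀ := by
  have hMsym : Mθᵀ = Mθ := hM.1.eq
  have hdet : IsUnit Mθ.det := isUnit_iff_ne_zero.2 hM.det_pos.ne'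
  have hinv : Mθ * Mθ⁻¹ = 1 := Matrix.mul_nonsing_inv _ hdet
  set D : Matrix (Fin q) (Fin q) ℝ :=
    Matrix.diagonal (fun k => φ k ^ 2 / (φ k ^ 2 + α)) with hD
  set Φ2 : Matrix (Fin q) (Fin q) ℝ := Matrix.diagonal (fun k => φ k ^ 2) with hΦ2
  have hXi' : ∀ (X : Matrix (Fin q) (Fin p) ℝ), Xiᵀ * (Xi * X) = X := by
    intro X; rw [← Matrix.mul_assoc, hXi, Matrix.one_mul]
  have hPsi' : ∀ (X : Matrix (Fin q) (Fin p) ℝ), Psiᵀ * (Mθ * (Psi * X)) = X := by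
    intro X
    calc Psiᵀ * (Mθ * (Psi * X)) = (Psiᵀ * Mθ * Psi) * X := by
          rw [Matrix.mul_assoc, Matrix.mul_assoc]
      _ = X := by rw [hPsi, Matrix.one_mul]
  have hdiag : ∀ (X : Matrix (Fin q) (Fin p) ℝ),
      Matrix.diagonal φ * (Matrix.diagonal φ * X) = Φ2 * X := by
    intro X
    rw [← Matrix.mul_assoc, Matrix.diagonal_mul_diagonal, hΦ2]
    congr 2
    funext k
    ring
  have hAtA : Aᵀ * A = Mθ * (Psi * (Φ2 * (Psiᵀ * Mθ))) := by
    subst hA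
    simp only [Matrix.transpose_mul, Matrix.transpose_transpose, hMsym,
      Matrix.diagonal_transpose, Matrix.mul_assoc, hXi', hdiag]
  have key : α⁻¹ • Φ2 - D - α⁻¹ • (Φ2 * D) = 0 := by
    rw [hD, hΦ2, Matrix.diagonal_mul_diagonal]
    ext i j
    rcases eq_or_ne i j with rfl | h
    · simp only [Matrix.sub_apply, Matrix.smul_apply, Matrix.diagonal_apply_eq,
        Matrix.zero_apply, smul_eq_mul]
      have hk : φ i ^ 2 + α ≠ 0 := by positivity
      field_simp
      ring
    · simp [Matrix.diagonal_apply_ne _ h]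
  apply Matrix.inv_eq_right_inv
  have expand : (Mθ + α⁻¹ • (Aᵀ * A)) * (Mθ⁻¹ - Psi * D * Psiᵀ)
      = 1 + Mθ * (Psi * ((α⁻¹ • Φ2 - D - α⁻¹ • (Φ2 * D)) * Psiᵀ)) := by
    rw [hAtA]
    rw [Matrix.add_mul, Matrix.mul_sub, Matrix.smul_mul, Matrix.mul_sub, hinv]
    simp only [Matrix.mul_assoc, hinv, Matrix.mul_one, hPsi']
    simp only [Matrix.sub_mul, Matrix.smul_mul, Matrix.mul_sub, Matrix.mul_smul,
      Matrix.mul_assoc, smul_add, smul_sub, smul_smul]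
    abel
  rw [expand, key, Matrix.zero_mul, Matrix.mul_zero, Matrix.mul_zero, add_zero]
end

section
/- Let A ∈ ℝ^{mN × p} be the vertical concatenation of A_ℓ = [I_m I_m ⊗ z_ℓᵀM_z], ℓ = 1,…,N, with p = m(n+1) and N ≤ n. Then A has full row rank mN; consequently, for every b ∈ ℝ^{mN} the set {θ ∈ ℝᵖ : Aθ = b} is nonempty, and if p > mN it is an affine subspace of dimension p − mN > 0 (so the interpolation problem has infinitely many solutions). -/
open Matrix

lemma Bsurj {n N : ℕ} (Mz : Matrix (Fin n) (Fin n) ℝ) (Z : Matrix (Fin n) (Fin N) ℝ)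
    (hMz : Mz.PosDef) (hZ : LinearIndependent ℝ fun ℓ : Fin N => Zᵀ ℓ) :
    Function.Surjective (Zᵀ * Mz).mulVec := by
  have hMzU : IsUnit Mz := (Matrix.isUnit_iff_isUnit_det Mz).2 hMz.det_pos.ne'.isUnit
  have hker : LinearMap.ker Mz.vecMulLinear = ⊥ := by
    rw [LinearMap.ker_eq_bot, Matrix.coe_vecMulLinear]
    exact Matrix.vecMul_injective_iff_isUnit.2 hMzU
  have hrows : LinearIndependent ℝ fun ℓ : Fin N => (Zᵀ * Mz) ℓ := by
    have h2 := hZ.map' Mz.vecMulLinear hker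
    have he : (fun ℓ : Fin N => (Zᵀ * Mz) ℓ) = fun ℓ => Mz.vecMulLinear (Zᵀ ℓ) := by
      funext ℓ
      funext k
      simp [Matrix.vecMulLinear_apply, Matrix.mul_apply, Matrix.vecMul, dotProduct]
    rw [he]
    exact h2
  have hrank : (Zᵀ * Mz).rank = N := by
    simpa using hrows.rank_matrix
  have htop : LinearMap.range (Zᵀ * Mz).mulVecLin = ⊤ := by
    apply Submodule.eq_top_of_finrank_eq
    rw [← Matrix.rank, hrank, Module.finrank_pi, Fintype.card_fin]
  intro b
  have : b ∈ LinearMap.range (Zᵀ * Mz).mulVecLin := htop ▸ Submodule.mem_top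
  obtain ⟨θ, hθ⟩ := this
  exact ⟨θ, hθ⟩

/-- `A` has full row rank `mN`; hence `Aθ = b` is solvable for every `b`, the solution set is
an affine subspace whose direction (the kernel) has dimension `p − mN = m(n+1) − Nm`, which
is positive when `p > mN`. -/
theorem stmt16 {m n N : ℕ} (Mz : Matrix (Fin n) (Fin n) ℝ) (Z : Matrix (Fin n) (Fin N) ℝ)
    (hMz : Mz.PosDef) (hN : N ≤ n)
    (hZ : LinearIndependent ℝ fun ℓ : Fin N => Zᵀ ℓ) :
    Function.Surjective (Abig (m := m) Mz Z).mulVec ∧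
    (Abig (m := m) Mz Z).rank = N * m ∧
    (∀ b : Fin N × Fin m → ℝ, {θ | (Abig (m := m) Mz Z).mulVec θ = b}.Nonempty) ∧
    Module.finrank ℝ (LinearMap.ker (Abig (m := m) Mz Z).mulVecLin)
      = m * (n + 1) - N * m ∧
    (N * m < m * (n + 1) → 0 < m * (n + 1) - N * m) := by
  have hB := Bsurj Mz Z hMz hZ
  have hsurj : Function.Surjective (Abig (m := m) Mz Z).mulVec := by
    intro b
    choose w hw using fun i : Fin m => hB (fun ℓ => b (ℓ, i))
    refine ⟨Sum.elim 0 (fun jk => w jk.1 jk.2), ?_⟩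
    funext li
    obtain ⟨ℓ, i⟩ := li
    have hwi := congr_fun (hw i) ℓ
    simp only [Matrix.mulVec, dotProduct, Matrix.mul_apply] at hwi ⊢
    rw [Fintype.sum_sum_type]
    simp only [Abig, Matrix.of_apply, Sum.elim_inl, Sum.elim_inr, Pi.zero_apply, mul_zero,
      Finset.sum_const_zero, zero_add]
    rw [Fintype.sum_prod_type]
    rw [Finset.sum_eq_single i]
    · simp only [if_pos rfl, one_mul]
      rw [← hwi]
      congr 1
      funext k
      simp [Matrix.mul_apply, Matrix.vecMul, dotProduct]
    · intro j _ hj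
      simp [Ne.symm hj]
    · intro h; exact absurd (Finset.mem_univ i) h
  have hrange : LinearMap.range (Abig (m := m) Mz Z).mulVecLin = ⊤ :=
    LinearMap.range_eq_top.2 hsurj
  have hrank : (Abig (m := m) Mz Z).rank = N * m := by
    rw [Matrix.rank, hrange, finrank_top, Module.finrank_pi]
    simp [Fintype.card_prod]
  have hcard : Fintype.card (Fin m ⊕ Fin m × Fin n) = m * (n + 1) := by
    simp [Fintype.card_sum, Fintype.card_prod]; ring
  have hrn := LinearMap.finrank_range_add_finrank_ker
    (Abig (m := m) Mz Z).mulVecLin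
  rw [Module.finrank_pi, hcard] at hrn
  have hrangeN : Module.finrank ℝ (LinearMap.range (Abig (m := m) Mz Z).mulVecLin) = N * m := by
    rw [hrange, finrank_top, Module.finrank_pi]
    simp [Fintype.card_prod]
  rw [hrangeN] at hrn
  refine ⟨hsurj, hrank, fun b => (hsurj b).imp fun θ h => h, by omega, by omega⟩
end
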